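/- Soundness of SC_LC⊳: if the sequent ⇒ φ is derivable in SC_LC⊳, then φ is LC⊳-valid, i.e., M,w ⊩ φ for every world w of every LC⊳-model M. -/

import Mathlib

/-- Formulas: atoms, ⊤, ⊥, ∧, ∨, →, irreflexive implication ⊳ (`iimp`), later ▷ (`later`). -/
inductive Fm : Type where
  | atom : ℕ → Fm
  | top : Fm
  | bot : Fm
  | and : Fm → Fm → Fm
  | or : Fm → Fm → Fm
  | imp : Fm → Fm → Fm
  | iimp : Fm → Fm → Fm
  | later : Fm → Fm
deriving DecidableEq

/-- A KM-model: nonempty set of worlds, transitive converse-well-founded relation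
(no infinite ascending chain), persistent valuation of atoms. -/
structure KMModel where
  W : Type
  nonempty : Nonempty W
  R : W → W → Prop
  trans : ∀ {x y z}, R x y → R y z → R x z
  cwf : ¬ ∃ f : ℕ → W, ∀ n, R (f n) (f (n + 1))
  val : ℕ → W → Prop
  persist : ∀ p {w x}, val p w → R w x → val p x

/-- Kripke forcing in a KM-model. -/
def KMModel.force (M : KMModel) : Fm → M.W → Prop
  | .atom p, w => M.val p w
  | .top, _ => True
  | .bot, _ => False
  | .and a b, w => M.force a w ∧ M.force b w
  | .or a b, w => M.force a w ∨ M.force b w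
  | .imp a b, w => ∀ x, (w = x ∨ M.R w x) → M.force a x → M.force b x
  | .iimp a b, w => ∀ x, M.R w x → M.force a x → M.force b x
  | .later a, w => ∀ x, M.R w x → M.force a x

/-- An LC⊳-model is a KM-model whose relation is moreover connected. -/
structure LCModel extends KMModel where
  conn : ∀ x y : W, x = y ∨ R x y ∨ R y x

/-- KM-validity. -/
def KMValid (φ : Fm) : Prop :=
  ∀ (M : KMModel) (w : M.W), M.force φ w

/-- LC⊳-validity. -/
def LCValid (φ : Fm) : Prop :=
  ∀ (M : LCModel) (w : M.W), M.toKMModel.force φ w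

/-- ω-semantics forcing (worlds are positive integers). -/
def wforce (η : ℕ → ℕ+ → Prop) : Fm → ℕ+ → Prop
  | .atom p, j => η p j
  | .top, _ => True
  | .bot, _ => False
  | .and a b, j => wforce η a j ∧ wforce η b j
  | .or a b, j => wforce η a j ∨ wforce η b j
  | .imp a b, j => ∀ k ≤ j, wforce η a k → wforce η b k
  | .iimp a b, j => ∀ k < j, wforce η a k → wforce η b k
  | .later a, j => ∀ k < j, wforce η a k

/-- `iimps G` is the set {γ ⊳ γ' | (γ,γ') ∈ G}. -/
def iimps (G : Finset (Fm × Fm)) : Finset Fm := G.image fun p => Fm.iimp p.1 p.2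

/-- `impsOf G` is the set {γ → γ' | (γ,γ') ∈ G}. -/
def impsOf (G : Finset (Fm × Fm)) : Finset Fm := G.image fun p => Fm.imp p.1 p.2

/-- `laters Θ` is the set {▷θ | θ ∈ Θ}. -/
def laters (Θ : Finset Fm) : Finset Fm := Θ.image Fm.later

def Fm.isAtom : Fm → Prop
  | .atom _ => True
  | _ => False

/-- The sequent calculus SC_LC⊳ on sequents of finite sets of formulas. -/
inductive DerivLC : Finset Fm → Finset Fm → Prop where
  | topR (Γ Δ) : DerivLC Γ (insert Fm.top Δ)
  | botL (Γ Δ) : DerivLC (insert Fm.bot Γ) Δ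
  | id (Γ Δ φ) : DerivLC (insert φ Γ) (insert φ Δ)
  | andL (Γ Δ φ ψ) : DerivLC (insert φ (insert ψ Γ)) Δ → DerivLC (insert (φ.and ψ) Γ) Δ
  | andR (Γ Δ φ ψ) : DerivLC Γ (insert φ Δ) → DerivLC Γ (insert ψ Δ) →
      DerivLC Γ (insert (φ.and ψ) Δ)
  | orL (Γ Δ φ ψ) : DerivLC (insert φ Γ) Δ → DerivLC (insert ψ Γ) Δ →
      DerivLC (insert (φ.or ψ) Γ) Δ
  | orR (Γ Δ φ ψ) : DerivLC Γ (insert φ (insert ψ Δ)) → DerivLC Γ (insert (φ.or ψ) Δ)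
  | impL (Γ Δ φ ψ) : DerivLC (insert (φ.iimp ψ) Γ) (insert φ Δ) →
      DerivLC (insert ψ (insert (φ.iimp ψ) Γ)) Δ →
      DerivLC (insert (φ.imp ψ) Γ) Δ
  | impR (Γ Δ φ ψ) : DerivLC (insert φ Γ) (insert ψ Δ) → DerivLC Γ (insert (φ.iimp ψ) Δ) →
      DerivLC Γ (insert (φ.imp ψ) Δ)
  | step (Sl Sr Θ Φ : Finset Fm) (G D : Finset (Fm × Fm)) :
      (∀ a ∈ Sl, a.isAtom) → (∀ a ∈ Sr, a.isAtom) →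
      Sl ∩ Sr = ∅ → Fm.bot ∉ Sl → Fm.top ∉ Sr →
      (D.Nonempty ∨ Φ.Nonempty) →
      (∀ pq ∈ D, DerivLC
          (Sl ∪ impsOf G ∪ Θ ∪ laters Θ ∪ ({Fm.iimp pq.1 pq.2, pq.1} : Finset Fm))
          (insert pq.2 ((impsOf D).erase (Fm.imp pq.1 pq.2) ∪ Φ))) →
      (∀ χ ∈ Φ, DerivLC
          (Sl ∪ Θ ∪ laters Θ ∪ impsOf G ∪ ({Fm.later χ} : Finset Fm))
          (impsOf D ∪ Φ)) →
      DerivLC (Sl ∪ laters Θ ∪ iimps G) (iimps D ∪ laters Φ ∪ Sr)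

/-- The sequent calculus SC_KM: same static rules, transitional rules (⊳R) and (▷R). -/
inductive DerivKM : Finset Fm → Finset Fm → Prop where
  | topR (Γ Δ) : DerivKM Γ (insert Fm.top Δ)
  | botL (Γ Δ) : DerivKM (insert Fm.bot Γ) Δ
  | id (Γ Δ φ) : DerivKM (insert φ Γ) (insert φ Δ)
  | andL (Γ Δ φ ψ) : DerivKM (insert φ (insert ψ Γ)) Δ → DerivKM (insert (φ.and ψ) Γ) Δ
  | andR (Γ Δ φ ψ) : DerivKM Γ (insert φ Δ) → DerivKM Γ (insert ψ Δ) →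
      DerivKM Γ (insert (φ.and ψ) Δ)
  | orL (Γ Δ φ ψ) : DerivKM (insert φ Γ) Δ → DerivKM (insert ψ Γ) Δ →
      DerivKM (insert (φ.or ψ) Γ) Δ
  | orR (Γ Δ φ ψ) : DerivKM Γ (insert φ (insert ψ Δ)) → DerivKM Γ (insert (φ.or ψ) Δ)
  | impL (Γ Δ φ ψ) : DerivKM (insert (φ.iimp ψ) Γ) (insert φ Δ) →
      DerivKM (insert ψ (insert (φ.iimp ψ) Γ)) Δ →
      DerivKM (insert (φ.imp ψ) Γ) Δ
  | impR (Γ Δ φ ψ) : DerivKM (insert φ Γ) (insert ψ Δ) → DerivKM Γ (insert (φ.iimp ψ) Δ) →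
      DerivKM Γ (insert (φ.imp ψ) Δ)
  | iimpR (Sl Sr Θ Φ : Finset Fm) (G D : Finset (Fm × Fm)) (φ ψ : Fm) :
      (∀ a ∈ Sl, a.isAtom) → (∀ a ∈ Sr, a.isAtom) →
      Sl ∩ Sr = ∅ → Fm.bot ∉ Sl → Fm.top ∉ Sr →
      DerivKM (Sl ∪ Θ ∪ laters Θ ∪ impsOf G ∪ ({Fm.iimp φ ψ, φ} : Finset Fm)) {ψ} →
      DerivKM (Sl ∪ laters Θ ∪ iimps G) (insert (Fm.iimp φ ψ) (iimps D ∪ laters Φ ∪ Sr))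
  | laterR (Sl Sr Θ Φ : Finset Fm) (G D : Finset (Fm × Fm)) (φ : Fm) :
      (∀ a ∈ Sl, a.isAtom) → (∀ a ∈ Sr, a.isAtom) →
      Sl ∩ Sr = ∅ → Fm.bot ∉ Sl → Fm.top ∉ Sr →
      DerivKM (Sl ∪ Θ ∪ laters Θ ∪ impsOf G ∪ ({Fm.later φ} : Finset Fm)) {φ} →
      DerivKM (Sl ∪ laters Θ ∪ iimps G) (insert (Fm.later φ) (iimps D ∪ laters Φ ∪ Sr))

/-- A sequent is refutable (over LC⊳-models) if some world of some LC⊳-model forces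
every antecedent formula and no succedent formula. -/
def RefutableLC (Γ Δ : Finset Fm) : Prop :=
  ∃ (M : LCModel) (w : M.W),
    (∀ γ ∈ Γ, M.toKMModel.force γ w) ∧ ∀ δ ∈ Δ, ¬ M.toKMModel.force δ w

/-- A sequent is refutable (over KM-models) if some world of some KM-model forces
every antecedent formula and no succedent formula. -/
def RefutableKM (Γ Δ : Finset Fm) : Prop :=
  ∃ (M : KMModel) (w : M.W),
    (∀ γ ∈ Γ, M.force γ w) ∧ ∀ δ ∈ Δ, ¬ M.force δ w

/-- Length of a formula: number of symbol occurrences. -/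
def Fm.len : Fm → ℕ
  | .atom _ => 1
  | .top => 1
  | .bot => 1
  | .and a b => a.len + b.len + 1
  | .or a b => a.len + b.len + 1
  | .imp a b => a.len + b.len + 1
  | .iimp a b => a.len + b.len + 1
  | .later a => a.len + 1

/-- An explicit numeric code for formulas. -/
def Fm.code : Fm → ℕ
  | .atom p => Nat.pair 0 p
  | .top => Nat.pair 1 0
  | .bot => Nat.pair 2 0
  | .and a b => Nat.pair 3 (Nat.pair a.code b.code)
  | .or a b => Nat.pair 4 (Nat.pair a.code b.code)
  | .imp a b => Nat.pair 5 (Nat.pair a.code b.code)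
  | .iimp a b => Nat.pair 6 (Nat.pair a.code b.code)
  | .later a => Nat.pair 7 a.code

/-- Formulas with no ⊳ and no ▷. -/
def Fm.noModal : Fm → Prop
  | .atom _ => True
  | .top => True
  | .bot => True
  | .and a b => a.noModal ∧ b.noModal
  | .or a b => a.noModal ∧ b.noModal
  | .imp a b => a.noModal ∧ b.noModal
  | .iimp _ _ => False
  | .later _ => False

/-- Classical Boolean evaluation (junk values on the modal connectives). -/
def Fm.beval (v : ℕ → Bool) : Fm → Bool
  | .atom p => v p
  | .top => true
  | .bot => false
  | .and a b => a.beval v && b.beval v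
  | .or a b => a.beval v || b.beval v
  | .imp a b => !(a.beval v) || b.beval v
  | .iimp _ _ => false
  | .later _ => false

/-!
Soundness is proved in its contrapositive, local form: a world refuting the conclusion of a rule
yields a world refuting one of its premises. For the static rules this is the same world, using
that `φ → ψ` holds at `w` iff `φ ⊳ ψ` does and `φ` implies `ψ` at `w`. For (step), every
`⊳`- or `▷`-formula failing at `w` has, by converse well-foundedness, a last failure above `w`;
by connectedness one of these finitely many worlds, `z`, lies below all the others. Then `z`
refutes every `→Δ` and every `Φ`, while it forces the `⊳`/`▷`-formula whose last failure it is,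
so `z` refutes the corresponding premise.
-/

namespace KMModel

variable (M : KMModel)

theorem wellFounded_flip : WellFounded (flip M.R) :=
  wellFounded_iff_isEmpty_descending_chain.mpr ⟨fun ⟨f, hf⟩ => M.cwf ⟨f, hf⟩⟩

theorem irrefl (x : M.W) : ¬ M.R x x :=
  fun h => M.cwf ⟨fun _ => x, fun _ => h⟩

theorem force_mono (φ : Fm) {w x : M.W} (hwx : w = x ∨ M.R w x) (hw : M.force φ w) :
    M.force φ x := by
  rcases hwx with rfl | hwx
  · exact hw
  induction φ generalizing w x with
  | atom p => exact M.persist p hw hwx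
  | top | bot => exact hw
  | and a b iha ihb => exact ⟨iha hw.1 hwx, ihb hw.2 hwx⟩
  | or a b iha ihb => exact hw.imp (iha · hwx) (ihb · hwx)
  | imp a b =>
    exact fun y hxy => hw y (.inr (hxy.elim (· ▸ hwx) (M.trans hwx)))
  | iimp a b => exact fun y hxy => hw y (M.trans hwx hxy)
  | later a => exact fun y hxy => hw y (M.trans hwx hxy)

theorem force_imp_iff {φ ψ : Fm} {w : M.W} :
    M.force (φ.imp ψ) w ↔ (M.force φ w → M.force ψ w) ∧ M.force (φ.iimp ψ) w := by
  simp only [force, eq_comm (a := w), or_imp, forall_and, forall_eq]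

theorem force_imp_of_iimp {φ ψ : Fm} {w x : M.W} (hwx : M.R w x)
    (h : M.force (φ.iimp ψ) w) : M.force (φ.imp ψ) x :=
  fun y hxy => h y (hxy.elim (· ▸ hwx) (M.trans hwx))

theorem exists_last_failure {w : M.W} {P : M.W → Prop} (h : ∃ x, M.R w x ∧ ¬ P x) :
    ∃ z, M.R w z ∧ ¬ P z ∧ ∀ y, M.R z y → P y := by
  obtain ⟨z, ⟨hwz, hz⟩, hmax⟩ := M.wellFounded_flip.has_min {x | M.R w x ∧ ¬ P x} h
  exact ⟨z, hwz, hz, fun y hzy => by_contra fun hy => hmax y ⟨M.trans hwz hzy, hy⟩ hzy⟩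

def Refutes (w : M.W) (Γ Δ : Finset Fm) : Prop :=
  (∀ γ ∈ Γ, M.force γ w) ∧ ∀ δ ∈ Δ, ¬ M.force δ w

variable {M}

@[simp]
theorem refutes_insert_left {w : M.W} {φ : Fm} {Γ Δ : Finset Fm} :
    M.Refutes w (insert φ Γ) Δ ↔ M.force φ w ∧ M.Refutes w Γ Δ := by
  simp only [Refutes, Finset.forall_mem_insert, and_assoc]

@[simp]
theorem refutes_insert_right {w : M.W} {φ : Fm} {Γ Δ : Finset Fm} :
    M.Refutes w Γ (insert φ Δ) ↔ ¬ M.force φ w ∧ M.Refutes w Γ Δ := by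
  simp only [Refutes, Finset.forall_mem_insert]
  tauto

theorem forces_step_context {w z : M.W} {Sl Θ : Finset Fm} {G : Finset (Fm × Fm)}
    (hwz : M.R w z) (hw : ∀ γ ∈ Sl ∪ laters Θ ∪ iimps G, M.force γ w) :
    ∀ γ ∈ Sl ∪ Θ ∪ laters Θ ∪ impsOf G, M.force γ z := by
  simp only [Finset.forall_mem_union, laters, iimps, impsOf, Finset.forall_mem_image] at hw ⊢
  obtain ⟨⟨hSl, hΘ⟩, hG⟩ := hw
  exact ⟨⟨⟨fun a ha => M.force_mono a (.inr hwz) (hSl a ha), fun θ hθ => hΘ hθ z hwz⟩,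
    fun θ hθ => M.force_mono (Fm.later θ) (.inr hwz) (hΘ hθ)⟩,
    fun pq hpq => M.force_imp_of_iimp hwz (hG hpq)⟩

end KMModel

namespace LCModel

variable (M : LCModel)

theorem exists_least {ι : Type*} [Finite ι] [Nonempty ι] (m : ι → M.W) :
    ∃ i₀, ∀ i, m i₀ = m i ∨ M.R (m i₀) (m i) := by
  have hwf : WellFounded fun i j => M.R (m i) (m j) :=
    @Finite.wellFounded_of_trans_of_irrefl ι _ _ ⟨fun _ _ _ => M.trans⟩
      ⟨fun i => M.irrefl (m i)⟩
  obtain ⟨i₀, -, hmin⟩ := hwf.has_min Set.univ Set.univ_nonempty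
  refine ⟨i₀, fun i => ?_⟩
  rcases M.conn (m i₀) (m i) with h | h | h
  exacts [.inl h, .inr h, (hmin i trivial h).elim]

theorem exists_last_failure_below_all {ι : Type*} [Finite ι] [Nonempty ι] {w : M.W}
    (P : ι → M.W → Prop) (h : ∀ i, ∃ x, M.R w x ∧ ¬ P i x) :
    ∃ z i₀, M.R w z ∧ ¬ P i₀ z ∧ (∀ y, M.R z y → P i₀ y) ∧
      ∀ i, ∃ y, (z = y ∨ M.R z y) ∧ ¬ P i y := by
  choose m hwm hm hlast using fun i => M.exists_last_failure (h i)
  obtain ⟨i₀, hleast⟩ := M.exists_least m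
  exact ⟨m i₀, i₀, hwm i₀, hm i₀, hlast i₀, fun i => ⟨m i, hleast i, hm i⟩⟩

variable {M}

theorem refutes_step_premise {w : M.W} {Sl Sr Θ Φ : Finset Fm} {G D : Finset (Fm × Fm)}
    (hne : D.Nonempty ∨ Φ.Nonempty)
    (hw : M.Refutes w (Sl ∪ laters Θ ∪ iimps G) (iimps D ∪ laters Φ ∪ Sr)) :
    ∃ z, (∃ pq ∈ D, M.Refutes z
        (Sl ∪ impsOf G ∪ Θ ∪ laters Θ ∪ ({Fm.iimp pq.1 pq.2, pq.1} : Finset Fm))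
        (insert pq.2 ((impsOf D).erase (Fm.imp pq.1 pq.2) ∪ Φ))) ∨
      ∃ χ ∈ Φ, M.Refutes z (Sl ∪ Θ ∪ laters Θ ∪ impsOf G ∪ ({Fm.later χ} : Finset Fm))
        (impsOf D ∪ Φ) := by
  obtain ⟨hctx, hsucc⟩ := hw
  simp only [Finset.forall_mem_union, iimps, laters, Finset.forall_mem_image] at hsucc
  obtain ⟨⟨hD, hΦ⟩, -⟩ := hsucc
  have : Nonempty (D ⊕ Φ) := by
    rcases hne with ⟨pq, hpq⟩ | ⟨χ, hχ⟩
    exacts [⟨.inl ⟨pq, hpq⟩⟩, ⟨.inr ⟨χ, hχ⟩⟩]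
  let P : D ⊕ Φ → M.W → Prop :=
    Sum.elim (fun pq x => M.force pq.1.1 x → M.force pq.1.2 x) (fun χ x => M.force χ.1 x)
  have hfail : ∀ i, ∃ x, M.R w x ∧ ¬ P i x := by
    rintro (⟨pq, hpq⟩ | ⟨χ, hχ⟩)
    · simpa [P, KMModel.force] using hD hpq
    · simpa [P, KMModel.force] using hΦ hχ
  obtain ⟨z, i₀, hwz, hz, hlast, hbelow⟩ := M.exists_last_failure_below_all P hfail
  have hctxz := KMModel.forces_step_context hwz hctx
  simp only [Finset.forall_mem_union] at hctxz
  obtain ⟨⟨⟨hSlz, hΘz⟩, hlΘz⟩, hGz⟩ := hctxz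
  have hDz : ∀ δ ∈ impsOf D, ¬ M.force δ z := by
    simp only [impsOf, Finset.forall_mem_image]
    intro pq hpq himp
    obtain ⟨y, hzy, hy⟩ := hbelow (.inl ⟨pq, hpq⟩)
    exact hy (himp y hzy)
  have hΦz : ∀ χ ∈ Φ, ¬ M.force χ z := fun χ hχ hχz => by
    obtain ⟨y, hzy, hy⟩ := hbelow (.inr ⟨χ, hχ⟩)
    exact hy (M.force_mono χ hzy hχz)
  refine ⟨z, ?_⟩
  rcases i₀ with ⟨pq, hpq⟩ | ⟨χ, hχ⟩
  · simp only [P, Sum.elim_inl, Classical.not_imp] at hz hlast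
    refine .inl ⟨pq, hpq, ?_, ?_⟩
    · simp only [Finset.forall_mem_union, Finset.forall_mem_insert, Finset.mem_singleton,
        forall_eq]
      exact ⟨⟨⟨⟨hSlz, hGz⟩, hΘz⟩, hlΘz⟩, hlast, hz.1⟩
    · simp only [Finset.forall_mem_insert, Finset.forall_mem_union]
      exact ⟨hz.2, fun δ hδ => hDz δ (Finset.mem_of_mem_erase hδ), hΦz⟩
  · simp only [P, Sum.elim_inr] at hz hlast
    refine .inr ⟨χ, hχ, ?_, ?_⟩
    · simp only [Finset.forall_mem_union, Finset.mem_singleton, forall_eq]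
      exact ⟨⟨⟨⟨hSlz, hΘz⟩, hlΘz⟩, hGz⟩, hlast⟩
    · simp only [Finset.forall_mem_union]
      exact ⟨hDz, hΦz⟩

end LCModel

theorem DerivLC.not_refutes {Γ Δ : Finset Fm} (h : DerivLC Γ Δ) (M : LCModel) (w : M.W) :
    ¬ M.Refutes w Γ Δ := by
  induction h generalizing w with
  | topR => simp [KMModel.force]
  | botL => simp [KMModel.force]
  | id => simp +contextual
  | andL Γ Δ φ ψ _ ih =>
    simpa only [KMModel.refutes_insert_left, KMModel.force, and_assoc] using ih w
  | andR Γ Δ φ ψ _ _ ih₁ ih₂ =>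
    simp only [KMModel.refutes_insert_right, KMModel.force] at ih₁ ih₂ ⊢
    rintro ⟨hφψ, hw⟩
    rcases not_and_or.mp hφψ with hφ | hψ
    exacts [ih₁ w ⟨hφ, hw⟩, ih₂ w ⟨hψ, hw⟩]
  | orL Γ Δ φ ψ _ _ ih₁ ih₂ =>
    simp only [KMModel.refutes_insert_left, KMModel.force] at ih₁ ih₂ ⊢
    rintro ⟨hφ | hψ, hw⟩
    exacts [ih₁ w ⟨hφ, hw⟩, ih₂ w ⟨hψ, hw⟩]
  | orR Γ Δ φ ψ _ ih =>
    simpa only [KMModel.refutes_insert_right, KMModel.force, not_or, and_assoc] using ih w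
  | impL Γ Δ φ ψ _ _ ih₁ ih₂ =>
    simp only [KMModel.refutes_insert_left, KMModel.refutes_insert_right,
      KMModel.force_imp_iff] at ih₁ ih₂ ⊢
    rintro ⟨⟨himp, hiimp⟩, hw⟩
    by_cases hφ : M.force φ w
    exacts [ih₂ w ⟨himp hφ, hiimp, hw⟩, ih₁ w ⟨hφ, hiimp, hw⟩]
  | impR Γ Δ φ ψ _ _ ih₁ ih₂ =>
    simp only [KMModel.refutes_insert_left, KMModel.refutes_insert_right,
      KMModel.force_imp_iff] at ih₁ ih₂ ⊢
    rintro ⟨himp, hw⟩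
    by_cases hiimp : M.force (φ.iimp ψ) w
    · obtain ⟨hφ, hψ⟩ := Classical.not_imp.mp fun hφψ => himp ⟨hφψ, hiimp⟩
      exact ih₁ w ⟨hψ, hφ, hw⟩
    · exact ih₂ w ⟨hiimp, hw⟩
  | step Sl Sr Θ Φ G D _ _ _ _ _ hne _ _ ihD ihΦ =>
    intro hw
    obtain ⟨z, ⟨pq, hpq, hz⟩ | ⟨χ, hχ, hz⟩⟩ := M.refutes_step_premise hne hw
    exacts [ihD pq hpq z hz, ihΦ χ hχ z hz]

/-- soundness of SC_LC⊳. -/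
theorem lc_soundness (φ : Fm) (h : DerivLC ∅ {φ}) : LCValid φ := fun M w =>
  by_contra fun hφ => h.not_refutes M w ⟨by simp, by simpa using hφ⟩
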